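/- arXiv:1808.08749 — 3 statements merged into one kernel-verified Lean document; each statement's English description precedes it below -/
import Mathlib

section
/- Let β>0, γ>0, σ>1, 0<α<1, S₀>0, R₀ᵢₙᵢₜ≥0, define r(S) := (γ/(σβ))·(1 − (1 − (σβ/γ)·R₀ᵢₙᵢₜ)·(S/S₀)^σ) and R̂(S) := (β/γ)·(S + ασ·r(S)) for 0≤S≤S₀, and assume R̂(S₀) = (β/γ)·(S₀ + ασR₀ᵢₙᵢₜ) ≤ 1. If (β/γ)·(S₀ + ασ²R₀ᵢₙᵢₜ) ≥ ασ, then R̂(S) ≤ 1 for all 0 ≤ S ≤ S₀. -/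
/-! Write `x = S / S₀` and `c = 1 - σ (β/γ) R₀`, so that `R̂(S) = (β/γ) S + α (1 - c x^σ)` and
`R̂(S₀) = (β/γ) S₀ + α (1 - c) ≤ 1`. It suffices that `R̂(S) ≤ R̂(S₀)`, i.e.
`α c (1 - x^σ) ≤ (β/γ) S₀ (1 - x)`. For `c < 0` the left side is nonpositive; for `c ≥ 0`,
Bernoulli's inequality `1 - x^σ ≤ σ (1 - x)` reduces it to `α σ c ≤ (β/γ) S₀`, which is the
case hypothesis `(β/γ)(S₀ + α σ² R₀) ≥ α σ`. -/

lemma one_sub_rpow_le_mul_one_sub {x σ : ℝ} (hx : 0 ≤ x) (hσ : 1 ≤ σ) :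
    1 - x ^ σ ≤ σ * (1 - x) := by
  have := one_add_mul_self_le_rpow_one_add (by linarith : (-1 : ℝ) ≤ x - 1) hσ
  simp only [add_sub_cancel] at this
  linarith

lemma mul_one_sub_rpow_le_mul_one_sub {a c B x σ : ℝ} (ha : 0 ≤ a) (hB : 0 ≤ B)
    (hx0 : 0 ≤ x) (hx1 : x ≤ 1) (hσ : 1 ≤ σ) (hc : a * σ * c ≤ B) :
    a * c * (1 - x ^ σ) ≤ B * (1 - x) := by
  rcases le_or_gt 0 c with hc0 | hc0
  · calc a * c * (1 - x ^ σ) ≤ a * c * (σ * (1 - x)) := by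
          gcongr; exact one_sub_rpow_le_mul_one_sub hx0 hσ
      _ = a * σ * c * (1 - x) := by ring
      _ ≤ B * (1 - x) := by gcongr
  · have hxσ : x ^ σ ≤ 1 := Real.rpow_le_one hx0 hx1 (by linarith)
    have hneg : a * c * (1 - x ^ σ) ≤ 0 :=
      mul_nonpos_of_nonpos_of_nonneg (mul_nonpos_of_nonneg_of_nonpos ha hc0.le) (by linarith)
    exact hneg.trans (mul_nonneg hB (by linarith))

lemma sirb_Rhat_eq {β γ σ α S₀ R₀init : ℝ} (hβ : β ≠ 0) (hγ : γ ≠ 0) (hσ : σ ≠ 0)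
    {r Rhat : ℝ → ℝ}
    (hr : ∀ S : ℝ, r S = γ / (σ * β) * (1 - (1 - σ * β / γ * R₀init) * (S / S₀) ^ σ))
    (hRhat : ∀ S : ℝ, Rhat S = β / γ * (S + α * σ * r S)) (S : ℝ) :
    Rhat S = β / γ * S + α * (1 - (1 - σ * β / γ * R₀init) * (S / S₀) ^ σ) := by
  rw [hRhat, hr]
  field_simp

theorem sirb_Rhat_le_one_sigma_gt_one_case1_general (β γ σ α S₀ R₀init : ℝ)
    (hβ : 0 < β) (hγ : 0 < γ) (hσ : 1 < σ) (hα0 : 0 < α)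
    (hS₀ : 0 < S₀)
    (r Rhat : ℝ → ℝ)
    (hr : ∀ S : ℝ, r S = γ / (σ * β) * (1 - (1 - σ * β / γ * R₀init) * (S / S₀) ^ σ))
    (hRhat : ∀ S : ℝ, Rhat S = β / γ * (S + α * σ * r S))
    (hR0le : β / γ * (S₀ + α * σ * R₀init) ≤ 1)
    (hcase : α * σ ≤ β / γ * (S₀ + α * σ ^ 2 * R₀init)) :
    ∀ S : ℝ, 0 ≤ S → S ≤ S₀ → Rhat S ≤ 1 := by
  intro S hS0 hSle
  set c := 1 - σ * β / γ * R₀init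
  have hcase' : α * σ * c ≤ β / γ * S₀ := by linear_combination hcase
  have hdrop : α * c * (1 - (S / S₀) ^ σ) ≤ β / γ * S₀ * (1 - S / S₀) :=
    mul_one_sub_rpow_le_mul_one_sub hα0.le (by positivity) (div_nonneg hS0 hS₀.le)
      ((div_le_one hS₀).mpr hSle) hσ.le hcase'
  have hS : β / γ * S₀ * (1 - S / S₀) = β / γ * S₀ - β / γ * S := by
    field_simp
  rw [sirb_Rhat_eq hβ.ne' hγ.ne' (by linarith) hr hRhat]
  linear_combination hR0le + hdrop + hS

/-- For `σ > 1`, if `ℛ₀ = (β/γ)(S₀ + ασR₀) ≤ 1` and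
`(β/γ)(S₀ + ασ²R₀) ≥ ασ`, then `R̂(S) ≤ 1` for all `0 ≤ S ≤ S₀`. -/
theorem sirb_Rhat_le_one_sigma_gt_one_case1 (β γ σ α S₀ R₀init : ℝ)
    (hβ : 0 < β) (hγ : 0 < γ) (hσ : 1 < σ) (hα0 : 0 < α) (hα1 : α < 1)
    (hS₀ : 0 < S₀) (hR₀ : 0 ≤ R₀init)
    (r Rhat : ℝ → ℝ)
    (hr : ∀ S : ℝ, r S = γ / (σ * β) * (1 - (1 - σ * β / γ * R₀init) * (S / S₀) ^ σ))
    (hRhat : ∀ S : ℝ, Rhat S = β / γ * (S + α * σ * r S))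
    (hR0le : β / γ * (S₀ + α * σ * R₀init) ≤ 1)
    (hcase : α * σ ≤ β / γ * (S₀ + α * σ ^ 2 * R₀init)) :
    ∀ S : ℝ, 0 ≤ S → S ≤ S₀ → Rhat S ≤ 1 :=
  sirb_Rhat_le_one_sigma_gt_one_case1_general β γ σ α S₀ R₀init hβ hγ hσ hα0 hS₀ r Rhat hr hRhat
    hR0le hcase
end

section
/- Let S, I, R, B : [0,∞) → ℝ be a solution of the SIRB system S' = −βSI, I' = βSI − γI + βσαIR, R' = γI − βσIR, B' = βσ(1−α)IR with β>0, γ>0, σ>1, 0<α<1, initial conditions S(0)>0, I(0)>0, R(0)≥0, B(0)≥0 with (σβ/γ)·R(0) < 1, S(0)+I(0)+R(0)+B(0)=1, and suppose S(t)>0 and I(t)>0 for all t≥0. Define r(S) := (γ/(σβ))·(1 − (1 − (σβ/γ)·R(0))·(S/S(0))^σ) and R̂(S) := (β/γ)·(S + ασ·r(S)). Assume ℛ₀ := R̂(S(0)) ≤ 1, (β/γ)·(S(0) + ασ²R(0)) < ασ, and R̂(S̃) ≤ 1 where S̃ := ((β/γ)·S(0) / (σα·(1 − (σβ/γ)·R(0))))^(1/(σ−1))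 · S(0). Then I is monotonically decreasing on [0,∞) and I(t) → 0 as t → ∞. -/
/-!
Along a solution, `(σβ/γ · R - 1) · S ^ (-σ)` is conserved, so `R = r(S)` and
`I' = γ I (R̂(S) - 1)`. With `C = 1 - (σβ/γ) R(0) > 0` and `σ > 1`, the map
`x ↦ R̂(x) = (β/γ) x + α (1 - C (x / S(0)) ^ σ)` is strictly concave with its critical point
at `S̃`, hence `R̂(S) < 1` except at the single instant where the strictly decreasing `S`
passes through `S̃`: so `I` is strictly decreasing.
If `I` stayed above some `L > 0`, then `(log S)' ≤ -βL` would force `S → 0`, so eventually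
`R̂(S) < (1 + α) / 2` and `I' ≤ -γL(1 - α)/2`, driving `I` below zero.
-/

open Set Filter Topology Real

section Calculus

variable {f f' : ℝ → ℝ} {a : ℝ}

theorem antitoneOn_Ici_of_hasDerivAt_nonpos (hf : ∀ t, a ≤ t → HasDerivAt f (f' t) t)
    (hf' : ∀ t, a ≤ t → f' t ≤ 0) : AntitoneOn f (Ici a) :=
  antitoneOn_of_hasDerivWithinAt_nonpos (convex_Ici a)
    (fun t ht => (hf t ht).continuousAt.continuousWithinAt)
    (fun t ht => (hf t (interior_subset ht)).hasDerivWithinAt)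
    (fun t ht => hf' t (interior_subset ht))

theorem strictAntiOn_Ici_of_hasDerivAt_nonpos (hf : ∀ t, a ≤ t → HasDerivAt f (f' t) t)
    (hf' : ∀ t, a ≤ t → f' t ≤ 0) (hzero : {t | a ≤ t ∧ f' t = 0}.Subsingleton) :
    StrictAntiOn f (Ici a) := by
  have hanti := antitoneOn_Ici_of_hasDerivAt_nonpos hf hf'
  intro s hs t ht hst
  refine (hanti hs ht hst.le).lt_of_ne' fun heq => ?_
  have hconst : ∀ u ∈ Icc s t, f u = f t := fun u hu =>
    le_antisymm (heq ▸ hanti hs (hs.trans hu.1) hu.1) (hanti (mem_Ici.2 (hs.trans hu.1)) ht hu.2)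
  have hvanish : ∀ u ∈ Ioo s t, f' u = 0 := fun u hu =>
    (hf u (hs.trans hu.1.le)).unique <| (hasDerivAt_const u (f t)).congr_of_eventuallyEq <|
      eventuallyEq_of_mem (Ioo_mem_nhds hu.1 hu.2) fun v hv => hconst v (Ioo_subset_Icc_self hv)
  exact (Ioo_infinite hst).nontrivial.not_subsingleton fun u hu v hv =>
    hzero ⟨hs.trans hu.1.le, hvanish u hu⟩ ⟨hs.trans hv.1.le, hvanish v hv⟩

theorem tendsto_atBot_of_hasDerivAt_le_neg {c : ℝ} (hc : 0 < c)
    (hf : ∀ t, a ≤ t → HasDerivAt f (f' t) t) (hf' : ∀ t, a ≤ t → f' t ≤ -c) :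
    Tendsto f atTop atBot := by
  have hanti : AntitoneOn (fun t => f t + c * t) (Ici a) :=
    antitoneOn_Ici_of_hasDerivAt_nonpos (fun t ht => (hf t ht).add ((hasDerivAt_id t).const_mul c))
      (fun t ht => by linarith [hf' t ht])
  have hlin : Tendsto (fun t => f a + c * a + -c * t) atTop atBot :=
    tendsto_atBot_add_const_left _ _ (tendsto_id.const_mul_atTop_of_neg (neg_neg_of_pos hc))
  refine tendsto_atBot_mono' atTop ?_ hlin
  filter_upwards [eventually_ge_atTop a] with t ht
  have := hanti (mem_Ici.2 le_rfl) (mem_Ici.2 ht) ht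
  simp only at this
  linarith

theorem tendsto_zero_of_antitoneOn_Ici (hf : AntitoneOn f (Ici a))
    (hnonneg : ∀ t, a ≤ t → 0 ≤ f t) (hsmall : ∀ ε, 0 < ε → ∃ t, a ≤ t ∧ f t < ε) :
    Tendsto f atTop (𝓝 0) := by
  refine tendsto_order.2 ⟨fun ε hε => ?_, fun ε hε => ?_⟩
  · filter_upwards [eventually_ge_atTop a] with t ht using hε.trans_le (hnonneg t ht)
  · obtain ⟨t₀, ht₀, hft₀⟩ := hsmall ε hε
    filter_upwards [eventually_ge_atTop t₀] with t ht using
      (hf ht₀ (mem_Ici.2 (ht₀.trans ht)) ht).trans_lt hft₀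

end Calculus

theorem rpow_add_mul_sub_lt_rpow {a b σ : ℝ} (ha : 0 < a) (hb : 0 ≤ b) (hσ : 1 < σ) (hne : b ≠ a) :
    a ^ σ + σ * a ^ (σ - 1) * (b - a) < b ^ σ := by
  have hs : -1 ≤ b / a - 1 := by have := div_nonneg hb ha.le; linarith
  have hs' : b / a - 1 ≠ 0 := by
    rwa [sub_ne_zero, ne_eq, div_eq_one_iff_eq ha.ne']
  have haσ := rpow_pos_of_pos ha σ
  have key := mul_lt_mul_of_pos_right (one_add_mul_self_lt_rpow_one_add hs hs' hσ) haσ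
  rw [add_sub_cancel, div_rpow hb ha.le, div_mul_cancel₀ _ haσ.ne'] at key
  calc a ^ σ + σ * a ^ (σ - 1) * (b - a) = (1 + σ * (b / a - 1)) * a ^ σ := by
        rw [rpow_sub_one ha.ne']; field_simp
    _ < b ^ σ := key

theorem mul_sub_mul_rpow_lt_of_ne {a b σ y y₀ : ℝ} (hb : 0 < b) (hσ : 1 < σ) (hy₀ : 0 < y₀)
    (hcrit : σ * b * y₀ ^ (σ - 1) = a) (hy : 0 ≤ y) (hne : y ≠ y₀) :
    a * y - b * y ^ σ < a * y₀ - b * y₀ ^ σ := by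
  have := mul_lt_mul_of_pos_left (rpow_add_mul_sub_lt_rpow hy₀ hy hσ hne) hb
  rw [← hcrit]
  linear_combination this

theorem add_mul_one_sub_mul_rpow_lt {k α C s₀ σ x x₀ : ℝ} (hk : 0 < k) (hα : 0 < α)
    (hC : 0 < C) (hs₀ : 0 < s₀) (hσ : 1 < σ)
    (hx₀ : x₀ = (k * s₀ / (σ * α * C)) ^ (1 / (σ - 1)) * s₀) (hx : 0 ≤ x) (hne : x ≠ x₀) :
    k * x + α * (1 - C * (x / s₀) ^ σ) < k * x₀ + α * (1 - C * (x₀ / s₀) ^ σ) := by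
  have hbase : 0 < k * s₀ / (σ * α * C) := by positivity
  have hy₀ : x₀ / s₀ = (k * s₀ / (σ * α * C)) ^ (1 / (σ - 1)) := by
    rw [hx₀, mul_div_cancel_right₀ _ hs₀.ne']
  have hcrit : σ * (α * C) * (x₀ / s₀) ^ (σ - 1) = k * s₀ := by
    rw [hy₀, one_div, rpow_inv_rpow hbase.le (by linarith)]
    field_simp
  have hmax := mul_sub_mul_rpow_lt_of_ne (mul_pos hα hC) hσ (hy₀ ▸ rpow_pos_of_pos hbase _) hcrit
    (div_nonneg hx hs₀.le) (fun h => hne (by rwa [div_left_inj' hs₀.ne'] at h))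
  have hx' : k * s₀ * (x / s₀) = k * x := by field_simp
  have hx₀' : k * s₀ * (x₀ / s₀) = k * x₀ := by field_simp
  linarith

section SIRB

variable {β γ σ α : ℝ} {S I R : ℝ → ℝ}

theorem sirb_recovered_eq (hγ : γ ≠ 0)
    (hS' : ∀ t, 0 ≤ t → HasDerivAt S (-(β * S t * I t)) t)
    (hR' : ∀ t, 0 ≤ t → HasDerivAt R (γ * I t - β * σ * I t * R t) t)
    (hSpos : ∀ t, 0 ≤ t → 0 < S t) (t : ℝ) (ht : 0 ≤ t) :
    σ * β / γ * R t - 1 = (σ * β / γ * R 0 - 1) * (S t / S 0) ^ σ := by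
  have hderiv : ∀ u, 0 ≤ u →
      HasDerivAt (fun u => (σ * β / γ * R u - 1) * S u ^ (-σ)) 0 u := by
    intro u hu
    have hSu := (hSpos u hu).ne'
    have hpow := (hasDerivAt_rpow_const (p := -σ) (Or.inl hSu)).comp u (hS' u hu)
    refine ((((hR' u hu).const_mul (σ * β / γ)).sub_const 1).mul hpow).congr_deriv ?_
    rw [rpow_sub_one hSu, Function.comp_apply]
    field_simp
    ring
  have hconst := constant_of_has_deriv_right_zero
    (fun u hu => (hderiv u hu.1).continuousAt.continuousWithinAt)
    (fun u hu => (hderiv u hu.1).hasDerivWithinAt) t ⟨ht, le_rfl⟩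
  have hS0 := hSpos 0 le_rfl
  have hSt := (rpow_pos_of_pos (hSpos t ht) σ).ne'
  rw [rpow_neg (hSpos t ht).le, rpow_neg hS0.le] at hconst
  rw [div_rpow (hSpos t ht).le hS0.le]
  field_simp at hconst ⊢
  linear_combination hconst

theorem sirb_susceptible_strictAntiOn (hβ : 0 < β)
    (hS' : ∀ t, 0 ≤ t → HasDerivAt S (-(β * S t * I t)) t)
    (hSpos : ∀ t, 0 ≤ t → 0 < S t) (hIpos : ∀ t, 0 ≤ t → 0 < I t) :
    StrictAntiOn S (Ici 0) :=
  strictAntiOn_of_hasDerivWithinAt_neg (convex_Ici 0)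
    (fun t ht => (hS' t ht).continuousAt.continuousWithinAt)
    (fun t ht => (hS' t (interior_subset ht)).hasDerivWithinAt) fun t ht =>
      neg_neg_of_pos <| mul_pos (mul_pos hβ (hSpos t (interior_subset ht)))
        (hIpos t (interior_subset ht))

theorem sirb_infected_strictAntiOn {ρ : ℝ → ℝ} {x₀ : ℝ} (hβ : 0 < β) (hγ : 0 < γ)
    (hS' : ∀ t, 0 ≤ t → HasDerivAt S (-(β * S t * I t)) t)
    (hI' : ∀ t, 0 ≤ t → HasDerivAt I (γ * I t * (ρ (S t) - 1)) t)
    (hSpos : ∀ t, 0 ≤ t → 0 < S t) (hIpos : ∀ t, 0 ≤ t → 0 < I t)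
    (hρ_lt : ∀ x, 0 < x → x ≠ x₀ → ρ x < 1) (hρx₀ : ρ x₀ ≤ 1) :
    StrictAntiOn I (Ici 0) := by
  have hρ_le (x : ℝ) (hx : 0 < x) : ρ x ≤ 1 := by
    rcases eq_or_ne x x₀ with rfl | hne
    exacts [hρx₀, (hρ_lt x hx hne).le]
  have hzero (t : ℝ) (ht : 0 ≤ t) (h : γ * I t * (ρ (S t) - 1) = 0) : S t = x₀ := by
    by_contra hne
    have := mul_neg_of_pos_of_neg (mul_pos hγ (hIpos t ht))
      (sub_neg.2 (hρ_lt _ (hSpos t ht) hne))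
    linarith
  refine strictAntiOn_Ici_of_hasDerivAt_nonpos hI' (fun t ht => ?_) ?_
  · exact mul_nonpos_of_nonneg_of_nonpos (mul_pos hγ (hIpos t ht)).le
      (sub_nonpos.2 (hρ_le _ (hSpos t ht)))
  · rintro t ⟨ht, ht0⟩ u ⟨hu, hu0⟩
    exact (sirb_susceptible_strictAntiOn hβ hS' hSpos hIpos).injOn ht hu
      ((hzero t ht ht0).trans (hzero u hu hu0).symm)

theorem sirb_exists_infected_lt {ρ : ℝ → ℝ} {k : ℝ} (hβ : 0 < β) (hγ : 0 < γ) (hα : α < 1)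
    (hS' : ∀ t, 0 ≤ t → HasDerivAt S (-(β * S t * I t)) t)
    (hI' : ∀ t, 0 ≤ t → HasDerivAt I (γ * I t * (ρ (S t) - 1)) t)
    (hSpos : ∀ t, 0 ≤ t → 0 < S t) (hIpos : ∀ t, 0 ≤ t → 0 < I t)
    (hρ : ∀ x, 0 < x → ρ x ≤ k * x + α) {L : ℝ} (hL : 0 < L) :
    ∃ t, 0 ≤ t ∧ I t < L := by
  by_contra! hIL
  have hlogS : Tendsto (fun t => log (S t)) atTop atBot :=
    tendsto_atBot_of_hasDerivAt_le_neg (mul_pos hβ hL)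
      (fun t ht => (hS' t ht).log (hSpos t ht).ne') fun t ht => by
        rw [neg_div, mul_div_right_comm, mul_div_cancel_right₀ _ (hSpos t ht).ne', neg_le_neg_iff]
        exact mul_le_mul_of_nonneg_left (hIL t ht) hβ.le
  have hS : Tendsto S atTop (𝓝 0) := (tendsto_exp_atBot.comp hlogS).congr' <| by
    filter_upwards [eventually_ge_atTop 0] with t ht using exp_log (hSpos t ht)
  have hSsmall : ∀ᶠ t in atTop, k * S t + α < (1 + α) / 2 := by
    refine (tendsto_const_nhds.mul hS |>.add_const α).eventually_lt_const ?_
    linarith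
  obtain ⟨t₀, ht₀⟩ := eventually_atTop.1 (hSsmall.and (eventually_ge_atTop 0))
  have hd : 0 < (1 - α) / 2 := by linarith
  have hI : Tendsto I atTop atBot := by
    refine tendsto_atBot_of_hasDerivAt_le_neg (a := t₀) (c := γ * L * ((1 - α) / 2))
      (mul_pos (mul_pos hγ hL) hd)
      (fun t ht => hI' t (ht₀ t ht).2) fun t ht => ?_
    obtain ⟨hρt, ht0⟩ := ht₀ t ht
    have hρ1 : ρ (S t) - 1 ≤ -((1 - α) / 2) := by linarith [hρ (S t) (hSpos t ht0)]
    calc γ * I t * (ρ (S t) - 1) ≤ γ * I t * -((1 - α) / 2) :=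
          mul_le_mul_of_nonneg_left hρ1 (mul_pos hγ (hIpos t ht0)).le
      _ ≤ -(γ * L * ((1 - α) / 2)) := by
          nlinarith [mul_le_mul_of_nonneg_left (hIL t ht0) hγ.le]
  obtain ⟨t, hIt, ht⟩ :=
    ((hI.eventually (eventually_lt_atBot 0)).and (eventually_ge_atTop 0)).exists
  exact (hIpos t ht).not_gt hIt

end SIRB

theorem sirb_no_epidemic_case2_general (β γ σ α : ℝ) (S I R : ℝ → ℝ)
    (hβ : 0 < β) (hγ : 0 < γ) (hσ : 1 < σ) (hα0 : 0 < α) (hα1 : α < 1)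
    (hS' : ∀ t : ℝ, 0 ≤ t → HasDerivAt S (-(β * S t * I t)) t)
    (hI' : ∀ t : ℝ, 0 ≤ t → HasDerivAt I (β * S t * I t - γ * I t + β * σ * α * I t * R t) t)
    (hR' : ∀ t : ℝ, 0 ≤ t → HasDerivAt R (γ * I t - β * σ * I t * R t) t)
    (hS0 : 0 < S 0)
    (hSpos : ∀ t : ℝ, 0 ≤ t → 0 < S t) (hIpos : ∀ t : ℝ, 0 ≤ t → 0 < I t)
    (hR0lt1 : σ * β / γ * R 0 < 1)
    (r Rhat : ℝ → ℝ)
    (hr : ∀ x : ℝ, r x = γ / (σ * β) * (1 - (1 - σ * β / γ * R 0) * (x / S 0) ^ σ))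
    (hRhat : ∀ x : ℝ, Rhat x = β / γ * (x + α * σ * r x))
    (Stilde : ℝ)
    (hSt : Stilde = (β / γ * S 0 / (σ * α * (1 - σ * β / γ * R 0))) ^ (1 / (σ - 1)) * S 0)
    (hRt : Rhat Stilde ≤ 1) :
    StrictAntiOn I (Set.Ici 0) ∧ Filter.Tendsto I Filter.atTop (nhds 0) := by
  have hC : 0 < 1 - σ * β / γ * R 0 := by linarith
  have hRhat_eq (x : ℝ) : Rhat x = β / γ * x + α * (1 - (1 - σ * β / γ * R 0) * (x / S 0) ^ σ) := by
    rw [hRhat, hr]; field_simp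
  have hI'' (t : ℝ) (ht : 0 ≤ t) : HasDerivAt I (γ * I t * (Rhat (S t) - 1)) t := by
    refine (hI' t ht).congr_deriv ?_
    have hcons := sirb_recovered_eq hγ.ne' hS' hR' hSpos t ht
    rw [hRhat_eq]
    field_simp at hcons ⊢
    linear_combination I t * α * hcons
  have hRhat_lt (x : ℝ) (hx : 0 < x) (hne : x ≠ Stilde) : Rhat x < 1 := by
    refine lt_of_lt_of_le ?_ hRt
    rw [hRhat_eq, hRhat_eq]
    exact add_mul_one_sub_mul_rpow_lt (div_pos hβ hγ) hα0 hC hS0 hσ hSt hx.le hne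
  have hRhat_le (x : ℝ) (hx : 0 < x) : Rhat x ≤ β / γ * x + α := by
    have := mul_nonneg hC.le (rpow_nonneg (div_nonneg hx.le hS0.le) σ)
    rw [hRhat_eq]
    nlinarith
  have hIanti := sirb_infected_strictAntiOn hβ hγ hS' hI'' hSpos hIpos hRhat_lt hRt
  exact ⟨hIanti, tendsto_zero_of_antitoneOn_Ici hIanti.antitoneOn (fun t ht => (hIpos t ht).le)
    fun ε hε => sirb_exists_infected_lt hβ hγ hα1 hS' hI'' hSpos hIpos hRhat_le hε⟩

/-- For `σ > 1`, if `ℛ₀ = R̂(S(0)) ≤ 1`, `(β/γ)(S(0) + ασ²R(0)) < ασ` and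
`R̂(S̃) ≤ 1`, then `I` is monotonically decreasing on `[0,∞)` and `I(t) → 0`. -/
theorem sirb_no_epidemic_case2 (β γ σ α : ℝ) (S I R B : ℝ → ℝ)
    (hβ : 0 < β) (hγ : 0 < γ) (hσ : 1 < σ) (hα0 : 0 < α) (hα1 : α < 1)
    (hS' : ∀ t : ℝ, 0 ≤ t → HasDerivAt S (-(β * S t * I t)) t)
    (hI' : ∀ t : ℝ, 0 ≤ t → HasDerivAt I (β * S t * I t - γ * I t + β * σ * α * I t * R t) t)
    (hR' : ∀ t : ℝ, 0 ≤ t → HasDerivAt R (γ * I t - β * σ * I t * R t) t)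
    (hB' : ∀ t : ℝ, 0 ≤ t → HasDerivAt B (β * σ * (1 - α) * I t * R t) t)
    (hS0 : 0 < S 0) (hI0 : 0 < I 0) (hR0 : 0 ≤ R 0) (hB0 : 0 ≤ B 0)
    (hsum : S 0 + I 0 + R 0 + B 0 = 1)
    (hSpos : ∀ t : ℝ, 0 ≤ t → 0 < S t) (hIpos : ∀ t : ℝ, 0 ≤ t → 0 < I t)
    (hR0lt1 : σ * β / γ * R 0 < 1)
    (r Rhat : ℝ → ℝ)
    (hr : ∀ x : ℝ, r x = γ / (σ * β) * (1 - (1 - σ * β / γ * R 0) * (x / S 0) ^ σ))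
    (hRhat : ∀ x : ℝ, Rhat x = β / γ * (x + α * σ * r x))
    (hR0le : Rhat (S 0) ≤ 1)
    (hcase : β / γ * (S 0 + α * σ ^ 2 * R 0) < α * σ)
    (Stilde : ℝ)
    (hSt : Stilde = (β / γ * S 0 / (σ * α * (1 - σ * β / γ * R 0))) ^ (1 / (σ - 1)) * S 0)
    (hRt : Rhat Stilde ≤ 1) :
    StrictAntiOn I (Set.Ici 0) ∧ Filter.Tendsto I Filter.atTop (nhds 0) :=
  sirb_no_epidemic_case2_general β γ σ α S I R hβ hγ hσ hα0 hα1 hS' hI' hR' hS0 hSpos hIpos hR0lt1 r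
    Rhat hr hRhat Stilde hSt hRt
end

section
/- Let S, I, R, B : [0,∞) → ℝ be a solution of the SIRB system S' = −βSI, I' = βSI − γI + βσαIR, R' = γI − βσIR, B' = βσ(1−α)IR with β>0, γ>0, σ>1, 0<α<1, initial conditions S(0)>0, I(0)>0, R(0)≥0, B(0)≥0 with (σβ/γ)·R(0) < 1, S(0)+I(0)+R(0)+B(0)=1, and suppose S(t)>0 and I(t)>0 for all t≥0. Define r(S) := (γ/(σβ))·(1 − (1 − (σβ/γ)·R(0))·(S/S(0))^σ), R̂(S) := (β/γ)·(S + ασ·r(S)), p(S) := (S(0) − S) + (γ/β)·ln(S/S(0)), and q(R) := (γ/(σβ))·ln((1 − (σβ/γ)R)/(1 − (σβ/γ)R(0))) + (R − R(0)). Assume ℛ₀ := R̂(S(0)) ≤ 1, (β/γ)·(S(0) + ασ²R(0)) < ασ, and R̂(S̃) > 1 where S̃ := ((β/γ)·S(0)/(σα·(1 − (σβ/γ)·R(0))))^(1/(σ−1)) · S(0); let Ŝ₂ be the larger of the two roots of R̂(S) = 1 in (0, S(0)). If I(0) + p(Ŝ₂) − α·q(r(Ŝ₂)) > 0, then there exist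 0 < t₁ < t₂ such that I is monotonically increasing on [t₁, t₂] and monotonically decreasing on [0, t₁] and on [t₂, ∞), and I(t) → 0 as t → ∞ (the delayed epidemic). -/
/-!
Along a positive solution, `S` is strictly decreasing; `R - r(S)` solves the linear equation
`W' = -βσ I W` with `W(0) = 0`, so `R = r(S)` by Grönwall; and `I - p(S) + α q(R)` is a first
integral. Hence `I = g(S)` with `g(x) = I(0) + p(x) - α q(r(x))`, and `I' = γ I (R̂(S) - 1)`.

Since `σ > 1`, `R̂` is strictly concave on `[0, ∞)`. With `R̂(0) = α < 1 < R̂(S̃)` this gives a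
root `Ŝ₁ < S̃ < Ŝ₂`, and `R̂ > 1` exactly on `(Ŝ₁, Ŝ₂)`. As `g'(x) = γ/(βx) (1 - R̂(x))`, the
minimum of `g` on `[Ŝ₁, S(0)]` is `g(Ŝ₂) > 0`, so `I ≥ g(Ŝ₂)` while `S ≥ Ŝ₁`, and then
`S' ≤ -β Ŝ₁ g(Ŝ₂)` forces `S` below `Ŝ₁` in finite time. The times at which `S` crosses `Ŝ₂`
and `Ŝ₁` are `t₁ < t₂`; beyond `t₂ + 1`, concavity keeps `R̂(S)` below `R̂(S(t₂ + 1)) < 1`,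
so `I` decays exponentially.
-/

open Set Filter Topology

theorem strictMonoOn_of_forall_hasDerivAt_pos {D : Set ℝ} (hD : Convex ℝ D) {f f' : ℝ → ℝ}
    (hf : ∀ x ∈ D, HasDerivAt f (f' x) x) (hf' : ∀ x ∈ interior D, 0 < f' x) :
    StrictMonoOn f D :=
  strictMonoOn_of_hasDerivWithinAt_pos hD (fun x hx ↦ (hf x hx).continuousAt.continuousWithinAt)
    (fun x hx ↦ (hf x (interior_subset hx)).hasDerivWithinAt) hf'

theorem strictAntiOn_of_forall_hasDerivAt_neg {D : Set ℝ} (hD : Convex ℝ D) {f f' : ℝ → ℝ}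
    (hf : ∀ x ∈ D, HasDerivAt f (f' x) x) (hf' : ∀ x ∈ interior D, f' x < 0) :
    StrictAntiOn f D :=
  strictAntiOn_of_hasDerivWithinAt_neg hD (fun x hx ↦ (hf x hx).continuousAt.continuousWithinAt)
    (fun x hx ↦ (hf x (interior_subset hx)).hasDerivWithinAt) hf'

theorem isMinOn_of_hasDerivAt_nonpos_nonneg {f f' : ℝ → ℝ} {a b c : ℝ} (hab : a ≤ b) (hbc : b ≤ c)
    (hf : ∀ x ∈ Icc a c, HasDerivAt f (f' x) x) (hleft : ∀ x ∈ Ioo a b, f' x ≤ 0)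
    (hright : ∀ x ∈ Ioo b c, 0 ≤ f' x) : IsMinOn f (Icc a c) b := by
  have hcont : ContinuousOn f (Icc a c) := fun x hx ↦ (hf x hx).continuousAt.continuousWithinAt
  intro x ⟨hax, hxc⟩
  rcases le_total x b with hxb | hbx
  · refine antitoneOn_of_hasDerivWithinAt_nonpos (f' := f') (convex_Icc a b)
      (hcont.mono (Icc_subset_Icc_right hbc)) (fun y hy ↦ ?_) (fun y hy ↦ ?_)
      ⟨hax, hxb⟩ ⟨hab, le_rfl⟩ hxb
    · rw [interior_Icc] at hy
      exact (hf y ⟨hy.1.le, hy.2.le.trans hbc⟩).hasDerivWithinAt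
    · exact hleft y (by rwa [interior_Icc] at hy)
  · refine monotoneOn_of_hasDerivWithinAt_nonneg (f' := f') (convex_Icc b c)
      (hcont.mono (Icc_subset_Icc_left hab)) (fun y hy ↦ ?_) (fun y hy ↦ ?_)
      ⟨le_rfl, hbc⟩ ⟨hbx, hxc⟩ hbx
    · rw [interior_Icc] at hy
      exact (hf y ⟨hab.trans hy.1.le, hy.2.le⟩).hasDerivWithinAt
    · exact hright y (by rwa [interior_Icc] at hy)

theorem eq_of_forall_hasDerivAt_zero {f : ℝ → ℝ} {a t : ℝ} (hf : ∀ x, a ≤ x → HasDerivAt f 0 x)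
    (ht : a ≤ t) : f t = f a :=
  constant_of_has_deriv_right_zero (fun x hx ↦ (hf x hx.1).continuousAt.continuousWithinAt)
    (fun x hx ↦ (hf x hx.1).hasDerivWithinAt) t ⟨ht, le_rfl⟩

theorem eq_zero_of_hasDerivAt_eq_mul_self {f g : ℝ → ℝ} {a t : ℝ} (hg : ContinuousOn g (Ici a))
    (hf : ∀ x, a ≤ x → HasDerivAt f (g x * f x) x) (ha : f a = 0) (ht : a ≤ t) : f t = 0 := by
  obtain ⟨K, hK⟩ := (isCompact_Icc (a := a) (b := t)).exists_bound_of_continuousOn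
    (hg.mono Icc_subset_Ici_self)
  refine eq_zero_of_abs_deriv_le_mul_abs_self_of_eq_zero_right (K := K)
    (fun x hx ↦ (hf x hx.1).continuousAt.continuousWithinAt)
    (fun x hx ↦ (hf x hx.1).hasDerivWithinAt) ha (fun x hx ↦ ?_) t ⟨ht, le_rfl⟩
  rw [norm_mul]
  exact mul_le_mul_of_nonneg_right (hK x (Ico_subset_Icc_self hx)) (norm_nonneg _)

theorem tendsto_zero_of_hasDerivAt_le_neg_mul {f f' : ℝ → ℝ} {a c : ℝ} (hc : 0 < c)
    (hf : ∀ x, a ≤ x → HasDerivAt f (f' x) x) (hf' : ∀ x, a ≤ x → f' x ≤ -c * f x)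
    (hpos : ∀ x, a ≤ x → 0 ≤ f x) : Tendsto f atTop (𝓝 0) := by
  have hbound : ∀ x, a ≤ x → f x ≤ f a * Real.exp (-c * (x - a)) := by
    intro x hx
    have := le_gronwallBound_of_liminf_deriv_right_le (f' := f') (K := -c) (ε := 0) (b := x)
      (fun y hy ↦ (hf y hy.1).continuousAt.continuousWithinAt)
      (fun y hy _ hr ↦ (hf y hy.1).hasDerivWithinAt.liminf_right_slope_le hr) le_rfl
      (fun y hy ↦ by simpa using hf' y hy.1) x ⟨hx, le_rfl⟩
    rwa [gronwallBound_ε0] at this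
  have hexp : Tendsto (fun x ↦ f a * Real.exp (-c * (x - a))) atTop (𝓝 0) := by
    have : Tendsto (fun x ↦ -c * (x - a)) atTop atBot :=
      (tendsto_atTop_add_const_right _ _ tendsto_id).const_mul_atTop_of_neg (by linarith)
    simpa using (Real.tendsto_exp_atBot.comp this).const_mul (f a)
  exact tendsto_of_tendsto_of_tendsto_of_le_of_le' tendsto_const_nhds hexp
    (eventually_atTop.2 ⟨a, hpos⟩) (eventually_atTop.2 ⟨a, hbound⟩)

theorem exists_lt_of_hasDerivAt_le_neg {f f' : ℝ → ℝ} {a b c : ℝ} (hc : 0 < c)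
    (hf : ∀ x, a ≤ x → HasDerivAt f (f' x) x) (hf' : ∀ x, a ≤ x → b ≤ f x → f' x ≤ -c) :
    ∃ x, a ≤ x ∧ f x < b := by
  by_contra! hge
  have hanti : AntitoneOn (fun x ↦ f x + c * x) (Ici a) :=
    antitoneOn_of_hasDerivWithinAt_nonpos (convex_Ici a) (f' := fun x ↦ f' x + c)
      (fun x hx ↦ ((hf x hx).add ((hasDerivAt_id x).const_mul c)).continuousAt.continuousWithinAt)
      (fun x hx ↦ by
        rw [interior_Ici] at hx
        exact ((hf x hx.le).add ((hasDerivAt_id x).const_mul c)).hasDerivWithinAt.congr_deriv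
          (by simp))
      (fun x hx ↦ by
        rw [interior_Ici] at hx
        linarith [hf' x hx.le (hge x hx.le)])
  obtain ⟨x, hax, hx⟩ : ∃ x, a ≤ x ∧ f a - b < c * (x - a) := by
    refine ⟨a + (|f a - b| + 1) / c, le_add_of_nonneg_right (by positivity), ?_⟩
    rw [add_sub_cancel_left, mul_div_cancel₀ _ hc.ne']
    linarith [le_abs_self (f a - b)]
  have := hanti self_mem_Ici hax hax
  linarith [hge x hax]

theorem tendsto_zero_of_hasDerivAt_mul_sub_one {γ c t₀ : ℝ} {I ρ : ℝ → ℝ} (hγ : 0 < γ)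
    (hc : c < 1) (hI : ∀ t, t₀ ≤ t → HasDerivAt I (γ * I t * (ρ t - 1)) t)
    (hIpos : ∀ t, t₀ ≤ t → 0 < I t) (hρ : ∀ t, t₀ ≤ t → ρ t ≤ c) :
    Tendsto I atTop (𝓝 0) :=
  tendsto_zero_of_hasDerivAt_le_neg_mul (mul_pos hγ (sub_pos.2 hc)) hI
    (fun t ht ↦ by nlinarith [mul_pos hγ (hIpos t ht), hρ t ht]) fun t ht ↦ (hIpos t ht).le

theorem hasDerivAt_div_rpow_const {σ S₀ : ℝ} (hS₀ : S₀ ≠ 0) {x : ℝ} (hx : x ≠ 0) :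
    HasDerivAt (fun y ↦ (y / S₀) ^ σ) (σ * (x / S₀) ^ σ / x) x := by
  have hxS : x / S₀ ≠ 0 := div_ne_zero hx hS₀
  refine ((Real.hasDerivAt_rpow_const (p := σ) (Or.inl hxS)).comp x
    ((hasDerivAt_id x).div_const S₀)).congr_deriv ?_
  rw [Real.rpow_sub_one hxS]
  field_simp

theorem strictConvexOn_mul_div_rpow {b σ S₀ : ℝ} (hb : 0 < b) (hσ : 1 < σ) (hS₀ : 0 < S₀) :
    StrictConvexOn ℝ (Ici 0) (fun x : ℝ ↦ b * (x / S₀) ^ σ) := by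
  refine ⟨convex_Ici 0, fun x hx y hy hxy s t hs ht hst ↦ ?_⟩
  have h := (strictConvexOn_rpow hσ).2 (div_nonneg hx hS₀.le) (div_nonneg hy hS₀.le)
    (by simpa [hS₀.ne'] using hxy) hs ht hst
  simp only [smul_eq_mul] at h ⊢
  rw [show (s * x + t * y) / S₀ = s * (x / S₀) + t * (y / S₀) by ring]
  nlinarith [mul_lt_mul_of_pos_left h hb]

theorem ConcaveOn.left_lt_of_mem_Ioo {s : Set ℝ} {f : ℝ → ℝ} {x y z : ℝ} (hf : ConcaveOn ℝ s f)
    (hx : x ∈ s) (hy : y ∈ s) (hz : z ∈ Ioo x y) (hzy : f z < f y) : f x < f z :=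
  hf.left_lt_of_lt_right hx hy (by rwa [openSegment_eq_Ioo (hz.1.trans hz.2)]) hzy

theorem ConcaveOn.right_lt_of_mem_Ioo {s : Set ℝ} {f : ℝ → ℝ} {x y z : ℝ} (hf : ConcaveOn ℝ s f)
    (hx : x ∈ s) (hy : y ∈ s) (hz : z ∈ Ioo x y) (hzx : f z < f x) : f y < f z :=
  hf.lt_right_of_left_lt hx hy (by rwa [openSegment_eq_Ioo (hz.1.trans hz.2)]) hzx

theorem StrictConcaveOn.lt_apply_of_mem_Ioo {s : Set ℝ} {f : ℝ → ℝ} {x y z c : ℝ}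
    (hf : StrictConcaveOn ℝ s f) (hx : x ∈ s) (hy : y ∈ s) (hz : z ∈ Ioo x y) (hcx : c ≤ f x)
    (hcy : c ≤ f y) : c < f z :=
  have hxy : x < y := hz.1.trans hz.2
  (le_min hcx hcy).trans_lt
    (hf.lt_on_openSegment hx hy hxy.ne (by rwa [openSegment_eq_Ioo hxy]))

theorem exists_crossing_times {S : ℝ → ℝ} {a b T : ℝ} (hS : ContinuousOn S (Ici 0))
    (hanti : StrictAntiOn S (Ici 0)) (hT : 0 ≤ T) (hST : S T < a) (hab : a < b) (hb : b < S 0) :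
    ∃ t₁ t₂, 0 < t₁ ∧ t₁ < t₂ ∧ S t₁ = b ∧ S t₂ = a := by
  have hST' : ContinuousOn S (Icc 0 T) := hS.mono Icc_subset_Ici_self
  obtain ⟨t₁, ⟨ht₁, -⟩, hSt₁⟩ := intermediate_value_Ioo' hT hST' ⟨hST.trans hab, hb⟩
  obtain ⟨t₂, ⟨ht₂, -⟩, hSt₂⟩ := intermediate_value_Ioo' hT hST' ⟨hST, hab.trans hb⟩
  refine ⟨t₁, t₂, ht₁, ?_, hSt₁, hSt₂⟩
  exact (hanti.lt_iff_gt (mem_Ici.2 ht₂.le) (mem_Ici.2 ht₁.le)).1 (by rwa [hSt₁, hSt₂])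

theorem exists_delayed_profile {γ a m b T : ℝ} {S I f : ℝ → ℝ} (hγ : 0 < γ)
    (hS : ContinuousOn S (Ici 0)) (hSanti : StrictAntiOn S (Ici 0))
    (hSpos : ∀ t, 0 ≤ t → 0 < S t)
    (hI : ∀ t, 0 ≤ t → HasDerivAt I (γ * I t * (f (S t) - 1)) t) (hIpos : ∀ t, 0 ≤ t → 0 < I t)
    (hf : StrictConcaveOn ℝ (Ici 0) f) (ha : 0 ≤ a) (ham : a < m) (hmb : m < b) (hfa : f a = 1)
    (hfb : f b = 1) (hfm : 1 < f m) (hbS : b < S 0) (hT : 0 ≤ T) (hST : S T < a) :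
    ∃ t₁ t₂ : ℝ, 0 < t₁ ∧ t₁ < t₂ ∧
      StrictMonoOn I (Icc t₁ t₂) ∧ StrictAntiOn I (Icc 0 t₁) ∧
      StrictAntiOn I (Ici t₂) ∧ Tendsto I atTop (𝓝 0) := by
  obtain ⟨t₁, t₂, ht₁, ht₁₂, hSt₁, hSt₂⟩ :=
    exists_crossing_times hS hSanti hT hST (ham.trans hmb) hbS
  have hm : m ∈ Ici 0 := ha.trans ham.le
  have hb : b ∈ Ici 0 := hm.trans hmb.le
  have hbelow : ∀ x, 0 ≤ x → x < a → f x < 1 := fun x hx hxa ↦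
    hfa ▸ hf.concaveOn.left_lt_of_mem_Ioo hx hm ⟨hxa, ham⟩ (hfa ▸ hfm)
  have habove : ∀ x, b < x → f x < 1 := fun x hbx ↦
    hfb ▸ hf.concaveOn.right_lt_of_mem_Ioo hm (hb.trans hbx.le) ⟨hmb, hbx⟩ (hfb ▸ hfm)
  have hSlt : ∀ s t, 0 ≤ s → s < t → S t < S s := fun s t hs hst ↦ hSanti hs (hs.trans hst.le) hst
  refine ⟨t₁, t₂, ht₁, ht₁₂, ?_, ?_, ?_, ?_⟩
  · refine strictMonoOn_of_forall_hasDerivAt_pos (convex_Icc _ _)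
      (fun t ht ↦ hI t (ht₁.le.trans ht.1)) fun t ht ↦ ?_
    rw [interior_Icc] at ht
    have ht0 : 0 ≤ t := ht₁.le.trans ht.1.le
    have : 1 < f (S t) := hf.lt_apply_of_mem_Ioo ha hb
      ⟨hSt₂ ▸ hSlt t t₂ ht0 ht.2, hSt₁ ▸ hSlt t₁ t ht₁.le ht.1⟩ hfa.ge hfb.ge
    exact mul_pos (mul_pos hγ (hIpos t ht0)) (sub_pos.2 this)
  · refine strictAntiOn_of_forall_hasDerivAt_neg (convex_Icc _ _)
      (fun t ht ↦ hI t ht.1) fun t ht ↦ ?_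
    rw [interior_Icc] at ht
    have : f (S t) < 1 := habove _ (hSt₁ ▸ hSlt t t₁ ht.1.le ht.2)
    exact mul_neg_of_pos_of_neg (mul_pos hγ (hIpos t ht.1.le)) (sub_neg.2 this)
  · refine strictAntiOn_of_forall_hasDerivAt_neg (convex_Ici _)
      (fun t ht ↦ hI t ((ht₁.trans ht₁₂).le.trans ht)) fun t ht ↦ ?_
    rw [interior_Ici] at ht
    have ht0 : 0 ≤ t := (ht₁.trans ht₁₂).le.trans ht.le
    have : f (S t) < 1 := hbelow _ (hSpos t ht0).le (hSt₂ ▸ hSlt t₂ t (ht₁.trans ht₁₂).le ht)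
    exact mul_neg_of_pos_of_neg (mul_pos hγ (hIpos t ht0)) (sub_neg.2 this)
  · have ht₃ : 0 ≤ t₂ + 1 := by linarith
    have hy : S (t₂ + 1) < a := hSt₂ ▸ hSlt t₂ _ (ht₁.trans ht₁₂).le (lt_add_one t₂)
    refine tendsto_zero_of_hasDerivAt_mul_sub_one hγ (hbelow _ (hSpos _ ht₃).le hy)
      (fun t ht ↦ hI t (ht₃.trans ht)) (fun t ht ↦ hIpos t (ht₃.trans ht)) fun t ht ↦ ?_
    rcases ht.eq_or_lt with rfl | ht
    · rfl
    · exact (hf.concaveOn.left_lt_of_mem_Ioo (hSpos t (ht₃.trans ht.le)).le ha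
        ⟨hSlt _ t ht₃ ht, hy⟩ (hfa ▸ hbelow _ (hSpos _ ht₃).le hy)).le

namespace SIRB

variable {β γ σ α S₀ R₀ : ℝ} {r Rhat p q : ℝ → ℝ}

theorem gamma_sub_mul_r (hr : ∀ x, r x = γ / (σ * β) * (1 - (1 - σ * β / γ * R₀) * (x / S₀) ^ σ))
    (hβ : β ≠ 0) (hσ : σ ≠ 0) (hγ : γ ≠ 0) (x : ℝ) :
    γ - β * σ * r x = γ * (1 - σ * β / γ * R₀) * (x / S₀) ^ σ := by
  rw [hr]
  field_simp
  ring

theorem hasDerivAt_r (hr : ∀ x, r x = γ / (σ * β) * (1 - (1 - σ * β / γ * R₀) * (x / S₀) ^ σ))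
    (hβ : β ≠ 0) (hσ : σ ≠ 0) (hγ : γ ≠ 0) (hS₀ : S₀ ≠ 0) {x : ℝ} (hx : x ≠ 0) :
    HasDerivAt r (-(γ - β * σ * r x) / (β * x)) x := by
  rw [gamma_sub_mul_r hr hβ hσ hγ, funext hr]
  refine (((hasDerivAt_div_rpow_const hS₀ hx).const_mul _).const_sub 1 |>.const_mul _).congr_deriv
    ?_
  field_simp

theorem hasDerivAt_p (hp : ∀ x, p x = (S₀ - x) + γ / β * Real.log (x / S₀)) (hS₀ : S₀ ≠ 0)
    {x : ℝ} (hx : x ≠ 0) : HasDerivAt p (-1 + γ / (β * x)) x := by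
  rw [funext hp]
  refine (((hasDerivAt_id x).const_sub S₀).add
    (((Real.hasDerivAt_log (div_ne_zero hx hS₀)).comp x
      ((hasDerivAt_id x).div_const S₀)).const_mul _)).congr_deriv ?_
  field_simp

theorem hasDerivAt_q
    (hq : ∀ y, q y = γ / (σ * β) * Real.log ((1 - σ * β / γ * y) / (1 - σ * β / γ * R₀)) + (y - R₀))
    (hβ : β ≠ 0) (hσ : σ ≠ 0) (hγ : γ ≠ 0) (hk : 1 - σ * β / γ * R₀ ≠ 0) {y : ℝ}
    (hy : γ - β * σ * y ≠ 0) : HasDerivAt q (-(β * σ * y) / (γ - β * σ * y)) y := by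
  have hy' : 1 - σ * β / γ * y ≠ 0 := by
    contrapose! hy
    field_simp at hy
    linarith
  have hy'' : γ - σ * β * y ≠ 0 := by rwa [mul_comm σ β]
  have hk' : γ - σ * β * R₀ ≠ 0 := by
    contrapose! hk
    field_simp
    linarith
  rw [funext hq]
  refine (((Real.hasDerivAt_log (div_ne_zero hy' hk)).comp y
    ((((hasDerivAt_id y).const_mul _).const_sub 1).div_const _)).const_mul _ |>.add
    ((hasDerivAt_id y).sub_const R₀)).congr_deriv ?_
  field_simp
  ring

theorem Rhat_eq (hr : ∀ x, r x = γ / (σ * β) * (1 - (1 - σ * β / γ * R₀) * (x / S₀) ^ σ))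
    (hRhat : ∀ x, Rhat x = β / γ * (x + α * σ * r x)) (hβ : β ≠ 0) (hσ : σ ≠ 0) (hγ : γ ≠ 0)
    (x : ℝ) : Rhat x = β / γ * x + α * (1 - (1 - σ * β / γ * R₀) * (x / S₀) ^ σ) := by
  rw [hRhat, hr]
  field_simp

theorem strictConcaveOn_Rhat
    (hr : ∀ x, r x = γ / (σ * β) * (1 - (1 - σ * β / γ * R₀) * (x / S₀) ^ σ))
    (hRhat : ∀ x, Rhat x = β / γ * (x + α * σ * r x)) (hβ : 0 < β) (hγ : 0 < γ) (hσ : 1 < σ)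
    (hα : 0 < α) (hk : 0 < 1 - σ * β / γ * R₀) (hS₀ : 0 < S₀) :
    StrictConcaveOn ℝ (Ici 0) Rhat := by
  have hlin : ConcaveOn ℝ (Ici 0) (fun x : ℝ ↦ β / γ * x + α) :=
    ((LinearMap.mul ℝ ℝ (β / γ)).concaveOn (convex_Ici 0)).add_const α
  refine (hlin.sub_strictConvexOn (strictConvexOn_mul_div_rpow (mul_pos hα hk) hσ hS₀)).congr
    fun x _ ↦ ?_
  rw [Pi.sub_apply, Rhat_eq hr hRhat hβ.ne' (by positivity) hγ.ne']
  ring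

theorem continuous_Rhat
    (hr : ∀ x, r x = γ / (σ * β) * (1 - (1 - σ * β / γ * R₀) * (x / S₀) ^ σ))
    (hRhat : ∀ x, Rhat x = β / γ * (x + α * σ * r x)) (hβ : β ≠ 0) (hσ : 0 < σ) (hγ : γ ≠ 0) :
    Continuous Rhat := by
  rw [funext (Rhat_eq hr hRhat hβ hσ.ne' hγ)]
  have := Real.continuous_rpow_const hσ.le
  fun_prop

theorem Rhat_zero (hr : ∀ x, r x = γ / (σ * β) * (1 - (1 - σ * β / γ * R₀) * (x / S₀) ^ σ))
    (hRhat : ∀ x, Rhat x = β / γ * (x + α * σ * r x)) (hβ : β ≠ 0) (hσ : σ ≠ 0) (hγ : γ ≠ 0) :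
    Rhat 0 = α := by
  rw [Rhat_eq hr hRhat hβ hσ hγ, zero_div, Real.zero_rpow hσ]
  ring

theorem mul_r_lt_gamma (hr : ∀ x, r x = γ / (σ * β) * (1 - (1 - σ * β / γ * R₀) * (x / S₀) ^ σ))
    (hβ : 0 < β) (hσ : 0 < σ) (hγ : 0 < γ) (hk : 0 < 1 - σ * β / γ * R₀) (hS₀ : 0 < S₀)
    {x : ℝ} (hx : 0 < x) : β * σ * r x < γ := by
  have := gamma_sub_mul_r hr hβ.ne' hσ.ne' hγ.ne' x
  have : 0 < (x / S₀) ^ σ := Real.rpow_pos_of_pos (div_pos hx hS₀) σ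
  nlinarith [mul_pos hγ hk]

theorem hasDerivAt_p_sub_q_r
    (hr : ∀ x, r x = γ / (σ * β) * (1 - (1 - σ * β / γ * R₀) * (x / S₀) ^ σ))
    (hRhat : ∀ x, Rhat x = β / γ * (x + α * σ * r x))
    (hp : ∀ x, p x = (S₀ - x) + γ / β * Real.log (x / S₀))
    (hq : ∀ y, q y = γ / (σ * β) * Real.log ((1 - σ * β / γ * y) / (1 - σ * β / γ * R₀)) + (y - R₀))
    (hβ : 0 < β) (hσ : 0 < σ) (hγ : 0 < γ) (hk : 0 < 1 - σ * β / γ * R₀) (hS₀ : 0 < S₀)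
    {x : ℝ} (hx : 0 < x) :
    HasDerivAt (fun x ↦ p x - α * q (r x)) (γ / (β * x) * (1 - Rhat x)) x := by
  have hrx := (sub_pos.2 (mul_r_lt_gamma hr hβ hσ hγ hk hS₀ hx)).ne'
  refine ((hasDerivAt_p hp hS₀.ne' hx.ne').sub (((hasDerivAt_q hq hβ.ne' hσ.ne' hγ.ne' hk.ne'
    hrx).comp x (hasDerivAt_r hr hβ.ne' hσ.ne' hγ.ne' hS₀.ne' hx.ne')).const_mul α)).congr_deriv ?_
  rw [hRhat]
  field_simp
  ring

theorem isMinOn_p_sub_q_r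
    (hr : ∀ x, r x = γ / (σ * β) * (1 - (1 - σ * β / γ * R₀) * (x / S₀) ^ σ))
    (hRhat : ∀ x, Rhat x = β / γ * (x + α * σ * r x))
    (hp : ∀ x, p x = (S₀ - x) + γ / β * Real.log (x / S₀))
    (hq : ∀ y, q y = γ / (σ * β) * Real.log ((1 - σ * β / γ * y) / (1 - σ * β / γ * R₀)) + (y - R₀))
    (hβ : 0 < β) (hσ : 0 < σ) (hγ : 0 < γ) (hk : 0 < 1 - σ * β / γ * R₀) (hS₀ : 0 < S₀)
    {a b : ℝ} (ha : 0 < a) (hab : a ≤ b) (hb : b ≤ S₀) (hleft : ∀ x ∈ Ioo a b, 1 ≤ Rhat x)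
    (hright : ∀ x ∈ Ioo b S₀, Rhat x ≤ 1) :
    IsMinOn (fun x ↦ p x - α * q (r x)) (Icc a S₀) b := by
  refine isMinOn_of_hasDerivAt_nonpos_nonneg hab hb
    (fun x hx ↦ hasDerivAt_p_sub_q_r hr hRhat hp hq hβ hσ hγ hk hS₀ (ha.trans_le hx.1))
    (fun x hx ↦ ?_) (fun x hx ↦ ?_)
  · have : 0 < γ / (β * x) := div_pos hγ (mul_pos hβ (ha.trans hx.1))
    nlinarith [hleft x hx]
  · have : 0 < γ / (β * x) := div_pos hγ (mul_pos hβ ((ha.trans_le hab).trans hx.1))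
    nlinarith [hright x hx]

section Solution

variable {S I R : ℝ → ℝ}

theorem strictAntiOn_S (hβ : 0 < β) (hS' : ∀ t, 0 ≤ t → HasDerivAt S (-(β * S t * I t)) t)
    (hSpos : ∀ t, 0 ≤ t → 0 < S t) (hIpos : ∀ t, 0 ≤ t → 0 < I t) :
    StrictAntiOn S (Ici 0) :=
  strictAntiOn_of_forall_hasDerivAt_neg (convex_Ici 0) hS' fun t ht ↦ by
    rw [interior_Ici] at ht
    exact neg_neg_of_pos (mul_pos (mul_pos hβ (hSpos t ht.le)) (hIpos t ht.le))

theorem R_eq_r_S (hβ : 0 < β) (hσ : 0 < σ) (hγ : 0 < γ)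
    (hS' : ∀ t, 0 ≤ t → HasDerivAt S (-(β * S t * I t)) t) (hI : ContinuousOn I (Ici 0))
    (hR' : ∀ t, 0 ≤ t → HasDerivAt R (γ * I t - β * σ * I t * R t) t)
    (hSpos : ∀ t, 0 ≤ t → 0 < S t)
    (hr : ∀ x, r x = γ / (σ * β) * (1 - (1 - σ * β / γ * R 0) * (x / S 0) ^ σ))
    {t : ℝ} (ht : 0 ≤ t) : R t = r (S t) := by
  have hW : ∀ s, 0 ≤ s →
      HasDerivAt (fun s ↦ R s - r (S s)) (-(β * σ * I s) * (R s - r (S s))) s := by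
    intro s hs
    have hSs := (hSpos s hs).ne'
    refine ((hR' s hs).sub ((hasDerivAt_r hr hβ.ne' hσ.ne' hγ.ne' (hSpos 0 le_rfl).ne'
      hSs).comp s (hS' s hs))).congr_deriv ?_
    field_simp
    ring
  have h0 : R 0 - r (S 0) = 0 := by
    rw [hr, div_self (hSpos 0 le_rfl).ne', Real.one_rpow]
    field_simp
    ring
  exact sub_eq_zero.1 (eq_zero_of_hasDerivAt_eq_mul_self (f := fun s ↦ R s - r (S s))
    (continuousOn_const.mul hI).neg hW h0 ht)

theorem hasDerivAt_I (hγ : 0 < γ)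
    (hI' : ∀ t, 0 ≤ t → HasDerivAt I (β * S t * I t - γ * I t + β * σ * α * I t * R t) t)
    (hRhat : ∀ x, Rhat x = β / γ * (x + α * σ * r x)) (hRS : ∀ t, 0 ≤ t → R t = r (S t))
    {t : ℝ} (ht : 0 ≤ t) : HasDerivAt I (γ * I t * (Rhat (S t) - 1)) t :=
  (hI' t ht).congr_deriv (by rw [hRS t ht, hRhat]; field_simp; ring)

theorem I_eq_add_p_sub_q (hβ : 0 < β) (hσ : 0 < σ) (hγ : 0 < γ)
    (hS' : ∀ t, 0 ≤ t → HasDerivAt S (-(β * S t * I t)) t)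
    (hI' : ∀ t, 0 ≤ t → HasDerivAt I (β * S t * I t - γ * I t + β * σ * α * I t * R t) t)
    (hR' : ∀ t, 0 ≤ t → HasDerivAt R (γ * I t - β * σ * I t * R t) t)
    (hSpos : ∀ t, 0 ≤ t → 0 < S t) (hR : ∀ t, 0 ≤ t → β * σ * R t < γ)
    (hp : ∀ x, p x = (S 0 - x) + γ / β * Real.log (x / S 0))
    (hq : ∀ y, q y =
      γ / (σ * β) * Real.log ((1 - σ * β / γ * y) / (1 - σ * β / γ * R 0)) + (y - R 0))
    {t : ℝ} (ht : 0 ≤ t) : I t = I 0 + p (S t) - α * q (R t) := by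
  have hk : 1 - σ * β / γ * R 0 ≠ 0 := by
    have := hR 0 le_rfl
    rw [sub_ne_zero, ne_comm, div_mul_eq_mul_div, ne_eq, div_eq_one_iff_eq hγ.ne', mul_comm σ β]
    exact this.ne
  have hΦ : ∀ s, 0 ≤ s → HasDerivAt (fun s ↦ I s - p (S s) + α * q (R s)) 0 s := by
    intro s hs
    have hRs := (sub_pos.2 (hR s hs)).ne'
    have hSs := (hSpos s hs).ne'
    refine (((hI' s hs).sub ((hasDerivAt_p hp (hSpos 0 le_rfl).ne' (hSpos s hs).ne').comp s
      (hS' s hs))).add (((hasDerivAt_q hq hβ.ne' hσ.ne' hγ.ne' hk hRs).comp s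
      (hR' s hs)).const_mul α)).congr_deriv ?_
    field_simp
    ring
  have hp0 : p (S 0) = 0 := by rw [hp, div_self (hSpos 0 le_rfl).ne', Real.log_one]; ring
  have hq0 : q (R 0) = 0 := by rw [hq, div_self hk, Real.log_one]; ring
  have := eq_of_forall_hasDerivAt_zero hΦ ht
  simp only [hp0, hq0] at this
  linarith

theorem exists_S_lt (hβ : 0 < β) (hS' : ∀ t, 0 ≤ t → HasDerivAt S (-(β * S t * I t)) t)
    {b m : ℝ} (hb : 0 < b) (hm : 0 < m) (hI : ∀ t, 0 ≤ t → b ≤ S t → m ≤ I t) :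
    ∃ t, 0 ≤ t ∧ S t < b :=
  exists_lt_of_hasDerivAt_le_neg (mul_pos (mul_pos hβ hb) hm) hS' fun t ht hbt ↦ by
    nlinarith [mul_le_mul hbt (hI t ht hbt) hm.le (hb.le.trans hbt)]

end Solution

end SIRB

theorem sirb_delayed_epidemic_general (β γ σ α : ℝ) (S I R : ℝ → ℝ)
    (hβ : 0 < β) (hγ : 0 < γ) (hσ : 1 < σ) (hα0 : 0 < α) (hα1 : α < 1)
    (hS' : ∀ t : ℝ, 0 ≤ t → HasDerivAt S (-(β * S t * I t)) t)
    (hI' : ∀ t : ℝ, 0 ≤ t → HasDerivAt I (β * S t * I t - γ * I t + β * σ * α * I t * R t) t)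
    (hR' : ∀ t : ℝ, 0 ≤ t → HasDerivAt R (γ * I t - β * σ * I t * R t) t)
    (hS0 : 0 < S 0)
    (hSpos : ∀ t : ℝ, 0 ≤ t → 0 < S t) (hIpos : ∀ t : ℝ, 0 ≤ t → 0 < I t)
    (hR0lt1 : σ * β / γ * R 0 < 1)
    (r Rhat : ℝ → ℝ)
    (hr : ∀ x : ℝ, r x = γ / (σ * β) * (1 - (1 - σ * β / γ * R 0) * (x / S 0) ^ σ))
    (hRhat : ∀ x : ℝ, Rhat x = β / γ * (x + α * σ * r x))
    (p q : ℝ → ℝ)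
    (hp : ∀ x : ℝ, p x = (S 0 - x) + γ / β * Real.log (x / S 0))
    (hq : ∀ x : ℝ,
      q x = γ / (σ * β) * Real.log ((1 - σ * β / γ * x) / (1 - σ * β / γ * R 0)) + (x - R 0))
    (Stilde : ℝ)
    (hSt : Stilde = (β / γ * S 0 / (σ * α * (1 - σ * β / γ * R 0))) ^ (1 / (σ - 1)) * S 0)
    (hRt : 1 < Rhat Stilde)
    (Shat2 : ℝ) (hS2a : Stilde < Shat2) (hS2b : Shat2 < S 0) (hS2root : Rhat Shat2 = 1)
    (hmin : 0 < I 0 + p Shat2 - α * q (r Shat2)) :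
    ∃ t₁ t₂ : ℝ, 0 < t₁ ∧ t₁ < t₂ ∧
      StrictMonoOn I (Set.Icc t₁ t₂) ∧ StrictAntiOn I (Set.Icc 0 t₁) ∧
      StrictAntiOn I (Set.Ici t₂) ∧ Filter.Tendsto I Filter.atTop (nhds 0) := by
  have hσ0 : 0 < σ := one_pos.trans hσ
  have hk : 0 < 1 - σ * β / γ * R 0 := by linarith
  have hSanti := SIRB.strictAntiOn_S hβ hS' hSpos hIpos
  have hRS : ∀ t, 0 ≤ t → R t = r (S t) := fun t ↦ SIRB.R_eq_r_S hβ hσ0 hγ hS'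
    (fun t ht ↦ (hI' t ht).continuousAt.continuousWithinAt) hR' hSpos hr
  have hconc := SIRB.strictConcaveOn_Rhat hr hRhat hβ hγ hσ hα0 hk hS0
  have hStilde : 0 ≤ Stilde := hSt ▸ by positivity
  obtain ⟨Shat1, ⟨hS1pos, hS1lt⟩, hS1root⟩ : ∃ x ∈ Ioo 0 Stilde, Rhat x = 1 :=
    intermediate_value_Ioo hStilde (SIRB.continuous_Rhat hr hRhat hβ.ne' hσ0 hγ.ne').continuousOn
      ⟨(SIRB.Rhat_zero hr hRhat hβ.ne' hσ0.ne' hγ.ne').trans_lt hα1, hRt⟩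
  have hgmin := SIRB.isMinOn_p_sub_q_r hr hRhat hp hq hβ hσ0 hγ hk hS0 hS1pos
    (hS1lt.trans hS2a).le hS2b.le
    (fun x hx ↦ (hconc.lt_apply_of_mem_Ioo hS1pos.le (hStilde.trans hS2a.le) hx
      hS1root.ge hS2root.ge).le)
    (fun x hx ↦ (hS2root ▸ hconc.concaveOn.right_lt_of_mem_Ioo hStilde
      (hStilde.trans (hS2a.trans hx.1).le) ⟨hS2a, hx.1⟩ (hS2root ▸ hRt)).le)
  have hlow : ∀ t, 0 ≤ t → Shat1 ≤ S t → I 0 + p Shat2 - α * q (r Shat2) ≤ I t := by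
    intro t ht hS1t
    have := isMinOn_iff.1 hgmin (S t) ⟨hS1t, hSanti.antitoneOn self_mem_Ici ht ht⟩
    rw [SIRB.I_eq_add_p_sub_q hβ hσ0 hγ hS' hI' hR' hSpos (fun s hs ↦ hRS s hs ▸
      SIRB.mul_r_lt_gamma hr hβ hσ0 hγ hk hS0 (hSpos s hs)) hp hq ht, hRS t ht]
    linarith
  obtain ⟨T, hT, hST⟩ := SIRB.exists_S_lt hβ hS' hS1pos hmin hlow
  exact exists_delayed_profile hγ (fun t ht ↦ (hS' t ht).continuousAt.continuousWithinAt) hSanti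
    hSpos (fun t ↦ SIRB.hasDerivAt_I hγ hI' hRhat hRS) hIpos hconc hS1pos.le hS1lt hS2a hS1root
    hS2root hRt hS2b hT hST

/-- Delayed epidemic: under `σ > 1`, `ℛ₀ ≤ 1`,
`(β/γ)(S(0) + ασ²R(0)) < ασ` and `R̂(S̃) > 1`, if
`I(0) + p(Ŝ₂) − α q(r(Ŝ₂)) > 0` (with `Ŝ₂` the larger root of `R̂ = 1` in `(0,S(0))`),
then there exist `0 < t₁ < t₂` such that `I` increases on `[t₁,t₂]`, decreases on
`[0,t₁]` and on `[t₂,∞)`, and `I(t) → 0`. -/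
theorem sirb_delayed_epidemic (β γ σ α : ℝ) (S I R B : ℝ → ℝ)
    (hβ : 0 < β) (hγ : 0 < γ) (hσ : 1 < σ) (hα0 : 0 < α) (hα1 : α < 1)
    (hS' : ∀ t : ℝ, 0 ≤ t → HasDerivAt S (-(β * S t * I t)) t)
    (hI' : ∀ t : ℝ, 0 ≤ t → HasDerivAt I (β * S t * I t - γ * I t + β * σ * α * I t * R t) t)
    (hR' : ∀ t : ℝ, 0 ≤ t → HasDerivAt R (γ * I t - β * σ * I t * R t) t)
    (hB' : ∀ t : ℝ, 0 ≤ t → HasDerivAt B (β * σ * (1 - α) * I t * R t) t)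
    (hS0 : 0 < S 0) (hI0 : 0 < I 0) (hR0 : 0 ≤ R 0) (hB0 : 0 ≤ B 0)
    (hsum : S 0 + I 0 + R 0 + B 0 = 1)
    (hSpos : ∀ t : ℝ, 0 ≤ t → 0 < S t) (hIpos : ∀ t : ℝ, 0 ≤ t → 0 < I t)
    (hR0lt1 : σ * β / γ * R 0 < 1)
    (r Rhat : ℝ → ℝ)
    (hr : ∀ x : ℝ, r x = γ / (σ * β) * (1 - (1 - σ * β / γ * R 0) * (x / S 0) ^ σ))
    (hRhat : ∀ x : ℝ, Rhat x = β / γ * (x + α * σ * r x))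
    (p q : ℝ → ℝ)
    (hp : ∀ x : ℝ, p x = (S 0 - x) + γ / β * Real.log (x / S 0))
    (hq : ∀ x : ℝ,
      q x = γ / (σ * β) * Real.log ((1 - σ * β / γ * x) / (1 - σ * β / γ * R 0)) + (x - R 0))
    (hR0le : Rhat (S 0) ≤ 1)
    (hcase : β / γ * (S 0 + α * σ ^ 2 * R 0) < α * σ)
    (Stilde : ℝ)
    (hSt : Stilde = (β / γ * S 0 / (σ * α * (1 - σ * β / γ * R 0))) ^ (1 / (σ - 1)) * S 0)
    (hRt : 1 < Rhat Stilde)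
    (Shat2 : ℝ) (hS2a : Stilde < Shat2) (hS2b : Shat2 < S 0) (hS2root : Rhat Shat2 = 1)
    (hmin : 0 < I 0 + p Shat2 - α * q (r Shat2)) :
    ∃ t₁ t₂ : ℝ, 0 < t₁ ∧ t₁ < t₂ ∧
      StrictMonoOn I (Set.Icc t₁ t₂) ∧ StrictAntiOn I (Set.Icc 0 t₁) ∧
      StrictAntiOn I (Set.Ici t₂) ∧ Filter.Tendsto I Filter.atTop (nhds 0) :=
  sirb_delayed_epidemic_general β γ σ α S I R hβ hγ hσ hα0 hα1 hS' hI' hR' hS0 hSpos hIpos hR0lt1 r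
    Rhat hr hRhat p q hp hq Stilde hSt hRt Shat2 hS2a hS2b hS2root hmin
end
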